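/- Every subset T of X × X containing the diagonal, with sup_x #(T[x]) ≤ k+1 and sup_x #(T⁻¹[x]) ≤ k+1 for some k, admits a label: a family L = {φ(0), φ(1), …, φ(N)} of subsets of T (for some N depending on k) with φ(0) the diagonal, whose union is T, and such that each φ(i) is the graph of a partially defined bijection (i.e., (z,x),(z,y) ∈ φ(i) ⟹ x = y, and (x,z),(y,z) ∈ φ(i) ⟹ x = y). -/

import Mathlib

/-!
Number the out-section `{y | (x, y) ∈ T}` of every `x` injectively by `f x : X → Fin (k + 1)`
and the in-section `{y | (y, x) ∈ T}` injectively by `g x`, and colour an off-diagonal pair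
`(x, y) ∈ T` by `(f x y, g y x)`. Two pairs of one colour sharing their first coordinate `z`
have the same number in the out-section of `z`, hence coincide, and symmetrically for the
second coordinate; so the `(k + 1)²` colour classes together with the diagonal form a label.
A set of pairs is the graph of a partial bijection exactly when both projections are injective
on it, which is how this is expressed below.
-/

open Set

theorem Set.Finite.exists_injOn_fin {α : Type*} {s : Set α} {n : ℕ} (hs : s.Finite)
    (hcard : s.ncard ≤ n + 1) : ∃ f : α → Fin (n + 1), InjOn f s := by
  obtain ⟨f, -, hf⟩ := hs.exists_injOn_of_encard_le (t := (univ : Set (Fin (n + 1)))) <| by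
    rw [encard_univ, ENat.card_eq_coe_fintype_card, Fintype.card_fin, ← hs.cast_ncard_eq]
    exact_mod_cast hcard
  exact ⟨f, hf⟩

section Coloring

variable {X α β : Type*} {T : Set (X × X)}

theorem injOn_fst_inter_preimage_of_injOn_outSection (c : X × X → α × β)
    (hc : ∀ x, InjOn (fun y => (c (x, y)).1) {y | (x, y) ∈ T}) (a : α × β) :
    InjOn Prod.fst (T ∩ c ⁻¹' {a}) := by
  rintro ⟨z, x⟩ ⟨hx, hcx⟩ ⟨z', y⟩ ⟨hy, hcy⟩ (rfl : z = z')
  rw [hc z hx hy (congrArg Prod.fst (hcx.trans hcy.symm))]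

theorem injOn_snd_inter_preimage_of_injOn_inSection (c : X × X → α × β)
    (hc : ∀ x, InjOn (fun y => (c (y, x)).2) {y | (y, x) ∈ T}) (a : α × β) :
    InjOn Prod.snd (T ∩ c ⁻¹' {a}) := by
  rintro ⟨x, z⟩ ⟨hx, hcx⟩ ⟨y, z'⟩ ⟨hy, hcy⟩ (rfl : z = z')
  rw [hc z hx hy (congrArg Prod.snd (hcx.trans hcy.symm))]

theorem exists_label_of_coloring {γ : Type*} [Fintype γ] (hdiag : {p : X × X | p.1 = p.2} ⊆ T)
    (c : X × X → γ)
    (hc : ∀ a, InjOn Prod.fst (T ∩ c ⁻¹' {a}) ∧ InjOn Prod.snd (T ∩ c ⁻¹' {a})) :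
    ∃ φ : Fin (Fintype.card γ + 1) → Set (X × X),
      φ 0 = {p : X × X | p.1 = p.2} ∧ (∀ i, φ i ⊆ T) ∧ (⋃ i, φ i) = T ∧
      ∀ i, InjOn Prod.fst (φ i) ∧ InjOn Prod.snd (φ i) := by
  set D := {p : X × X | p.1 = p.2}
  let e := Fintype.equivFin γ
  let φ : Fin (Fintype.card γ + 1) → Set (X × X) :=
    Fin.cases D fun i => (T \ D) ∩ c ⁻¹' {e.symm i}
  have hφ_subset : ∀ i, φ i ⊆ T := Fin.cases hdiag fun i => sdiff_subset.trans' inter_subset_left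
  refine ⟨φ, rfl, hφ_subset, ?_, Fin.cases ?_ fun i => ?_⟩
  · refine (iUnion_subset hφ_subset).antisymm fun p hp => ?_
    by_cases hpD : p ∈ D
    · exact mem_iUnion_of_mem 0 hpD
    · exact mem_iUnion_of_mem (Fin.succ (e (c p))) ⟨⟨hp, hpD⟩, by simp⟩
  · exact ⟨fun p hp q hq h => Prod.ext h (by rw [← hp, ← hq, h]),
      fun p hp q hq h => Prod.ext (by rw [hp, hq, h]) h⟩
  · have hsub : φ i.succ ⊆ T ∩ c ⁻¹' {e.symm i} := inter_subset_inter_left _ sdiff_subset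
    exact ⟨(hc _).1.mono hsub, (hc _).2.mono hsub⟩

end Coloring

theorem label_exists.{u} (k : ℕ) :
    ∃ N : ℕ, ∀ (X : Type u) (T : Set (X × X)),
      {p : X × X | p.1 = p.2} ⊆ T →
      (∀ x : X, {y | (y, x) ∈ T}.Finite ∧ {y | (y, x) ∈ T}.ncard ≤ k + 1) →
      (∀ x : X, {y | (x, y) ∈ T}.Finite ∧ {y | (x, y) ∈ T}.ncard ≤ k + 1) →
      ∃ φ : Fin (N + 1) → Set (X × X),
        φ 0 = {p : X × X | p.1 = p.2} ∧
        (∀ i, φ i ⊆ T) ∧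
        (⋃ i, φ i) = T ∧
        ∀ i, (∀ z x y : X, (z, x) ∈ φ i → (z, y) ∈ φ i → x = y) ∧
             (∀ x y z : X, (x, z) ∈ φ i → (y, z) ∈ φ i → x = y) := by
  refine ⟨Fintype.card (Fin (k + 1) × Fin (k + 1)), fun X T hdiag hin hout => ?_⟩
  choose f hf using fun x => (hout x).1.exists_injOn_fin (hout x).2
  choose g hg using fun x => (hin x).1.exists_injOn_fin (hin x).2
  let c : X × X → Fin (k + 1) × Fin (k + 1) := fun p => (f p.1 p.2, g p.2 p.1)
  obtain ⟨φ, hφ0, hφT, hφU, hφinj⟩ := exists_label_of_coloring hdiag c fun a =>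
    ⟨injOn_fst_inter_preimage_of_injOn_outSection c hf a,
      injOn_snd_inter_preimage_of_injOn_inSection c hg a⟩
  refine ⟨φ, hφ0, hφT, hφU, fun i => ⟨fun z x y hx hy => ?_, fun x y z hx hy => ?_⟩⟩
  · exact congrArg Prod.snd ((hφinj i).1 hx hy rfl)
  · exact congrArg Prod.fst ((hφinj i).2 hx hy rfl)
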